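/- Let A be a finite alphabet and P_A a probability distribution on A with P_A(a) > 0 for all a ∈ A. Let γ = [n_a]_{a∈A} be a composition with Σ_a n_a = n ≥ 1, let Q be the n-type Q(a) = n_a / n, and let w be a natural number. Define Δk = max_{c ∈ T_γ} Σ_{i=0}^{n−1} log₂(1 + 2^{−w} / P(c_{i+1} | c₁^i)), k_FPA = ⌊log₂ |T_γ| − Δk⌋, and let C ⊆ T_γ be any codebook with |C| = 2^{k_FPA}, with P_{Ã} the uniform distribution on C. Then the normalized Kullback–Leibler divergence satisfies (1/n) D(P_{Ã} ‖ P_A^n) ≥ log₂(1 + 2^{−w}) + D(Q ‖ P_A), where D(P_{Ã} ‖ P_A^n) = Σ_{c∈C} (1/|C|) log₂( (1/|C|) / Π_{i=1}^n P_A(c_i) ) and D(Q ‖ P_A) = Σ_{a: Q(a)>0} Q(a) log₂(Q(a)/P_A(a)). -/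

import Mathlib

/-- Number of occurrences of symbol `a` among the first `i` entries of `c`. -/
def prefCount {A : Type*} [DecidableEq A] {n : ℕ} (c : Fin n → A) (i : Fin n) (a : A) : ℕ :=
  (Finset.univ.filter (fun j : Fin n => j < i ∧ c j = a)).card

/-- The FPA dilation sum `S(c) = Σᵢ log₂(1 + 2^{−w} / P(c_{i+1}|c₁^i))` with CCDM
    branching probabilities `P(c_{i+1}|c₁^i) = (n_{c_{i+1}} − n_{c_{i+1}}(c₁^i))/(n − i)`. -/
noncomputable def fpaSum {A : Type*} [DecidableEq A] {n : ℕ} (γ : A → ℕ) (w : ℕ)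
    (c : Fin n → A) : ℝ :=
  ∑ i : Fin n, Real.logb 2
    (1 + ((2 : ℝ) ^ w)⁻¹ /
      (((γ (c i) : ℝ) - (prefCount c i (c i) : ℝ)) / ((n : ℝ) - (i : ℕ))))

/-- The type class `T_γ` of sequences of length `n` with composition `γ`. -/
def typeClass {A : Type*} [Fintype A] [DecidableEq A] (n : ℕ) (γ : A → ℕ) :
    Finset (Fin n → A) :=
  Finset.univ.filter (fun c => ∀ a, (Finset.univ.filter (fun i => c i = a)).card = γ a)

-- composition product lemma
lemma prod_eq_pow {A : Type*} [Fintype A] [DecidableEq A] {n : ℕ} {γ : A → ℕ}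
    {c : Fin n → A} (hc : c ∈ typeClass n γ) (f : A → ℝ) :
    ∏ i : Fin n, f (c i) = ∏ a, f a ^ γ a := by
  have hc' : ∀ a, (Finset.univ.filter (fun i => c i = a)).card = γ a :=
    (Finset.mem_filter.mp hc).2
  rw [← Finset.prod_fiberwise' Finset.univ c f]
  refine Finset.prod_congr rfl fun a _ => ?_
  rw [Finset.prod_const, hc' a]

-- lower bound for fpaSum
lemma fpaSum_ge {A : Type*} [Fintype A] [DecidableEq A] {n : ℕ} {γ : A → ℕ}
    (hγsum : ∑ a, γ a = n)
    {c : Fin n → A} (hc : c ∈ typeClass n γ) (w : ℕ) :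
    (n : ℝ) * Real.logb 2 (1 + ((2 : ℝ) ^ w)⁻¹) ≤ fpaSum γ w c := by
  have hc' : ∀ a, (Finset.univ.filter (fun i => c i = a)).card = γ a :=
    (Finset.mem_filter.mp hc).2
  have hx : (0:ℝ) < ((2 : ℝ) ^ w)⁻¹ := by positivity
  rw [fpaSum]
  calc (n : ℝ) * Real.logb 2 (1 + ((2 : ℝ) ^ w)⁻¹)
      = ∑ _i : Fin n, Real.logb 2 (1 + ((2 : ℝ) ^ w)⁻¹) := by
        rw [Finset.sum_const, Finset.card_univ, Fintype.card_fin, nsmul_eq_mul]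
    _ ≤ _ := by
        apply Finset.sum_le_sum
        intro i _
        set a := c i with ha
        set m := prefCount c i a with hm
        -- counting facts
        have hsplit : (Finset.univ.filter (fun j : Fin n => c j = a ∧ j < i)).card
            + (Finset.univ.filter (fun j : Fin n => c j = a ∧ ¬ j < i)).card = γ a := by
          rw [← Finset.filter_filter, ← Finset.filter_filter,
            Finset.card_filter_add_card_filter_not, hc' a]
        have hmeq : (Finset.univ.filter (fun j : Fin n => c j = a ∧ j < i)).card = m := by
          rw [hm, prefCount]; congr 1; ext j; simp [and_comm]
        have hB1 : 1 ≤ (Finset.univ.filter (fun j : Fin n => c j = a ∧ ¬ j < i)).card := by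
          refine Finset.card_pos.mpr ⟨i, ?_⟩
          simp [ha]
        have hBle : (Finset.univ.filter (fun j : Fin n => c j = a ∧ ¬ j < i)).card
            ≤ n - (i : ℕ) := by
          have h1 : (Finset.univ.filter (fun j : Fin n => c j = a ∧ ¬ j < i))
              ⊆ (Finset.univ.filter (fun j : Fin n => ¬ j < i)) := by
            intro j hj
            simp only [Finset.mem_filter, Finset.mem_univ, true_and] at hj ⊢
            exact hj.2
          have h2 : (Finset.univ.filter (fun j : Fin n => ¬ j < i)).card = n - (i : ℕ) := by
            have h3 : (Finset.univ.filter (fun j : Fin n => j < i)).card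
                + (Finset.univ.filter (fun j : Fin n => ¬ j < i)).card = n := by
              rw [Finset.card_filter_add_card_filter_not, Finset.card_univ,
                Fintype.card_fin]
            have h4 : (Finset.univ.filter (fun j : Fin n => j < i)).card = (i : ℕ) := by
              have : (Finset.univ.filter (fun j : Fin n => j < i)) = Finset.Iio i := by
                ext j; simp
              rw [this, Fin.card_Iio]
            omega
          exact le_trans (Finset.card_le_card h1) (le_of_eq h2)
        have hilt : (i : ℕ) < n := i.isLt
        -- real versions
        have hnum1 : (1:ℝ) ≤ (γ a : ℝ) - (m : ℝ) := by
          have : m + 1 ≤ γ a := by omega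
          have := (Nat.cast_le (α := ℝ)).mpr this
          push_cast at this ⊢; linarith
        have hden1 : (1:ℝ) ≤ (n : ℝ) - (i : ℕ) := by
          have : ((i:ℕ):ℝ) + 1 ≤ (n:ℝ) := by exact_mod_cast hilt
          linarith
        have hnumle : (γ a : ℝ) - (m : ℝ) ≤ (n : ℝ) - (i : ℕ) := by
          have hnat : γ a + (i : ℕ) ≤ n + m := by omega
          have := (Nat.cast_le (α := ℝ)).mpr hnat
          push_cast at this; linarith
        set P : ℝ := ((γ a : ℝ) - (m : ℝ)) / ((n : ℝ) - (i : ℕ)) with hPdef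
        have hP0 : 0 < P := by apply div_pos <;> linarith
        have hP1 : P ≤ 1 := by
          rw [hPdef, div_le_one (by linarith)]; exact hnumle
        apply Real.logb_le_logb_of_le one_lt_two (by linarith)
        have : ((2 : ℝ) ^ w)⁻¹ ≤ ((2 : ℝ) ^ w)⁻¹ / P := by
          rw [le_div_iff₀ hP0]; nlinarith
        linarith

-- type class cardinality bound
lemma typeClass_card_bound {A : Type*} [Fintype A] [DecidableEq A] {n : ℕ} (hn : 1 ≤ n)
    {γ : A → ℕ} (hγsum : ∑ a, γ a = n) :
    ((typeClass n γ).card : ℝ) * ∏ a, ((γ a : ℝ) / n) ^ γ a ≤ 1 := by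
  have hn0 : (n:ℝ) ≠ 0 := by positivity
  have key : ∑ c ∈ typeClass n γ, ∏ i : Fin n, ((γ (c i) : ℝ) / n)
      ≤ ∑ c : Fin n → A, ∏ i : Fin n, ((γ (c i) : ℝ) / n) := by
    apply Finset.sum_le_sum_of_subset_of_nonneg (Finset.subset_univ _)
    intro c _ _
    positivity
  have lhs_eq : ∑ c ∈ typeClass n γ, ∏ i : Fin n, ((γ (c i) : ℝ) / n)
      = ((typeClass n γ).card : ℝ) * ∏ a, ((γ a : ℝ) / n) ^ γ a := by
    rw [Finset.sum_congr rfl (fun c hc => prod_eq_pow hc (fun a => (γ a : ℝ)/n)), Finset.sum_const,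
      nsmul_eq_mul]
  have rhs_eq : ∑ c : Fin n → A, ∏ i : Fin n, ((γ (c i) : ℝ) / n) = 1 := by
    rw [← Fintype.sum_pow (fun a => ((γ a : ℝ) / n)) n]
    rw [← Finset.sum_div]
    rw [show ∑ a, ((γ a : ℝ)) = (n:ℝ) by exact_mod_cast congrArg (Nat.cast (R := ℝ)) hγsum]
    rw [div_self hn0, one_pow]
  calc ((typeClass n γ).card : ℝ) * ∏ a, ((γ a : ℝ) / n) ^ γ a
      = ∑ c ∈ typeClass n γ, ∏ i : Fin n, ((γ (c i) : ℝ) / n) := lhs_eq.symm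
    _ ≤ ∑ c : Fin n → A, ∏ i : Fin n, ((γ (c i) : ℝ) / n) := key
    _ = 1 := rhs_eq

/-- Corollary 1, part 2: with `Δk` the FPA rate-loss, `k_FPA = ⌊log₂|T_γ| − Δk⌋`,
    and `C ⊆ T_γ` a codebook of size `2^{k_FPA}` carrying the uniform distribution,
    the normalized divergence satisfies
    `(1/n) D(P_Ã ‖ P_A^n) ≥ log₂(1 + 2^{−w}) + D(Q ‖ P_A)`. -/
theorem fpa_ccdm_divergence_ge {A : Type*} [Fintype A] [DecidableEq A]
    (PA : A → ℝ) (hPA : ∀ a, 0 < PA a) (hPAsum : ∑ a, PA a = 1)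
    (n : ℕ) (hn : 1 ≤ n) (γ : A → ℕ) (hγsum : ∑ a, γ a = n) (w : ℕ)
    (Δk : ℝ)
    (hΔk : IsGreatest {y : ℝ | ∃ c ∈ typeClass n γ, fpaSum γ w c = y} Δk)
    (C : Finset (Fin n → A)) (hC : C ⊆ typeClass n γ)
    (hCcard : (C.card : ℝ) =
      2 ^ (⌊Real.logb 2 ((typeClass n γ).card : ℝ) - Δk⌋ : ℤ)) :
    (1 / (n : ℝ)) *
        (∑ c ∈ C, (1 / (C.card : ℝ)) *
          Real.logb 2 ((1 / (C.card : ℝ)) / ∏ i : Fin n, PA (c i))) ≥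
      Real.logb 2 (1 + ((2 : ℝ) ^ w)⁻¹) +
        ∑ a ∈ Finset.univ.filter (fun a => 0 < γ a),
          ((γ a : ℝ) / n) * Real.logb 2 (((γ a : ℝ) / n) / PA a) := by
  have hn0 : (0:ℝ) < n := by exact_mod_cast hn
  set K : ℤ := ⌊Real.logb 2 ((typeClass n γ).card : ℝ) - Δk⌋ with hK
  set L : ℝ := Real.logb 2 (1 + ((2 : ℝ) ^ w)⁻¹) with hL
  set SP : ℝ := ∑ a, (γ a : ℝ) * Real.logb 2 (PA a) with hSP
  set SQ : ℝ := ∑ a ∈ Finset.univ.filter (fun a => 0 < γ a),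
      (γ a : ℝ) * Real.logb 2 ((γ a : ℝ) / n) with hSQ
  -- basic positivity
  have hCpos : (0:ℝ) < C.card := by rw [hCcard]; positivity
  have hCne : (C.card : ℝ) ≠ 0 := ne_of_gt hCpos
  have hlog2 : Real.log 2 ≠ 0 := ne_of_gt (Real.log_pos one_lt_two)
  have hlogC : Real.logb 2 (C.card : ℝ) = (K : ℝ) := by
    rw [hCcard, Real.logb, Real.log_zpow]
    field_simp
  -- Δk is achieved and bounds
  obtain ⟨⟨c₀, hc₀, hc₀eq⟩, hub⟩ := hΔk
  have hΔge : (n : ℝ) * L ≤ Δk := hc₀eq ▸ fpaSum_ge hγsum hc₀ w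
  have hKle : (K : ℝ) ≤ Real.logb 2 ((typeClass n γ).card : ℝ) - Δk := Int.floor_le _
  -- type class size bound : logb |T| + SQ ≤ 0
  have hTpos : (0:ℝ) < ((typeClass n γ).card : ℝ) := by
    have : (typeClass n γ).Nonempty := ⟨c₀, hc₀⟩
    exact_mod_cast Finset.card_pos.mpr this
  have hPprod_pos : (0:ℝ) < ∏ a, ((γ a : ℝ) / n) ^ γ a := by
    apply Finset.prod_pos
    intro a _
    rcases Nat.eq_zero_or_pos (γ a) with h | h
    · simp [h]
    · have : (0:ℝ) < (γ a : ℝ) / n := by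
        apply div_pos _ hn0; exact_mod_cast h
      positivity
  have hlogP : Real.logb 2 (∏ a, ((γ a : ℝ) / n) ^ γ a) = SQ := by
    rw [Real.logb_prod]
    · have hcongr : ∀ a ∈ (Finset.univ : Finset A),
          Real.logb 2 (((γ a : ℝ)/n) ^ γ a) = (γ a : ℝ) * Real.logb 2 ((γ a : ℝ)/n) :=
        fun a _ => Real.logb_pow 2 _ _
      rw [Finset.sum_congr rfl hcongr, hSQ, Finset.sum_filter_of_ne]
      intro a _ hne
      by_contra h
      simp only [not_lt, Nat.le_zero] at h
      simp [h] at hne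
    · intro a _
      rcases Nat.eq_zero_or_pos (γ a) with h | h
      · simp [h]
      · have : (0:ℝ) < (γ a : ℝ) / n := by
          apply div_pos _ hn0; exact_mod_cast h
        positivity
  have hT : Real.logb 2 ((typeClass n γ).card : ℝ) + SQ ≤ 0 := by
    have hmul := typeClass_card_bound hn hγsum (A := A) (γ := γ)
    have h0 : Real.logb 2 (((typeClass n γ).card : ℝ) * ∏ a, ((γ a : ℝ) / n) ^ γ a) ≤ 0 :=
      Real.logb_nonpos one_lt_two (by positivity) hmul
    rw [Real.logb_mul (ne_of_gt hTpos) (ne_of_gt hPprod_pos), hlogP] at h0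
    exact h0
  -- simplify the divergence sum
  have hterm : ∀ c ∈ C, (1 / (C.card : ℝ)) *
      Real.logb 2 ((1 / (C.card : ℝ)) / ∏ i : Fin n, PA (c i))
      = (1 / (C.card : ℝ)) * (-(K : ℝ) - SP) := by
    intro c hc
    congr 1
    have hprod : ∏ i : Fin n, PA (c i) = ∏ a, PA a ^ γ a := prod_eq_pow (hC hc) PA
    have hprodpos : (0:ℝ) < ∏ a, PA a ^ γ a := by
      apply Finset.prod_pos; intro a _; exact pow_pos (hPA a) _
    rw [hprod, Real.logb_div (one_div_ne_zero hCne) (ne_of_gt hprodpos),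
      Real.logb_prod _ _ (fun a _ => pow_ne_zero _ (ne_of_gt (hPA a)))]
    rw [one_div, Real.logb_inv, hlogC]
    have : ∑ a, Real.logb 2 (PA a ^ γ a) = SP := by
      exact Finset.sum_congr rfl fun a _ => Real.logb_pow 2 _ _
    rw [this]
  have hsum : ∑ c ∈ C, (1 / (C.card : ℝ)) *
      Real.logb 2 ((1 / (C.card : ℝ)) / ∏ i : Fin n, PA (c i))
      = -(K : ℝ) - SP := by
    rw [Finset.sum_congr rfl hterm, Finset.sum_const, nsmul_eq_mul]
    field_simp
  rw [hsum]
  -- rewrite RHS sum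
  have hRHS : ∑ a ∈ Finset.univ.filter (fun a => 0 < γ a),
      ((γ a : ℝ) / n) * Real.logb 2 (((γ a : ℝ) / n) / PA a)
      = (1 / (n:ℝ)) * (SQ - SP) := by
    have hSPf : ∑ a ∈ Finset.univ.filter (fun a => 0 < γ a),
        (γ a : ℝ) * Real.logb 2 (PA a) = SP := by
      rw [hSP, Finset.sum_filter_of_ne]
      intro a _ hne
      by_contra h
      simp only [not_lt, Nat.le_zero] at h
      simp [h] at hne
    rw [hSQ, ← hSPf, ← Finset.sum_sub_distrib, Finset.mul_sum]
    refine Finset.sum_congr rfl fun a ha => ?_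
    have hγa : 0 < γ a := (Finset.mem_filter.mp ha).2
    have hQpos : (0:ℝ) < (γ a : ℝ) / n := by
      apply div_pos _ hn0; exact_mod_cast hγa
    rw [Real.logb_div (ne_of_gt hQpos) (ne_of_gt (hPA a))]
    field_simp
  rw [hRHS]
  -- final arithmetic
  have hmain : (n:ℝ) * L + (SQ - SP) ≤ -(K : ℝ) - SP := by linarith
  rw [ge_iff_le]
  calc L + 1 / (n:ℝ) * (SQ - SP) = (1 / (n:ℝ)) * ((n:ℝ) * L + (SQ - SP)) := by
        field_simp
    _ ≤ (1 / (n:ℝ)) * (-(K : ℝ) - SP) := by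
        apply mul_le_mul_of_nonneg_left hmain (by positivity)
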